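/- Let P be a tripartite no-signalling distribution maximally violating the three-party Mermin inequality. Then for the input x_m = (0,0,1), the probability that exactly one of the three outcomes equals -1 is P = (1/4)(3 - ⟨0⟩₁ - ⟨0⟩₂ - ⟨1⟩₃), and this probability is at least 1/2. -/

import Mathlib

/-- Outcomes `±1` are encoded by `Bool`: `true ↦ -1`, `false ↦ +1`;
inputs `{0,1}` are encoded by `Bool`: `false ↦ 0`, `true ↦ 1`. -/
noncomputable def sgn (b : Bool) : ℝ := if b then -1 else 1

/-- The correlator of `P` over the set of parties `S`. -/
noncomputable def corr {N : ℕ} (P : (Fin N → Bool) → ℝ) (S : Finset (Fin N)) : ℝ :=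
  ∑ a : Fin N → Bool, P a * ∏ i ∈ S, sgn (a i)

/-- A probability distribution on outcome strings. -/
def IsProb {N : ℕ} (P : (Fin N → Bool) → ℝ) : Prop :=
  (∀ a, 0 ≤ P a) ∧ ∑ a : Fin N → Bool, P a = 1

/-- An `N`-party no-signalling box: `P x` is a distribution for every input `x`, and
the marginal on any set `S` of parties depends only on the inputs of parties in `S`. -/
def IsNSBox {N : ℕ} (P : (Fin N → Bool) → (Fin N → Bool) → ℝ) : Prop :=
  (∀ x, IsProb (P x)) ∧
  ∀ (x y : Fin N → Bool) (S : Finset (Fin N)), (∀ i ∈ S, x i = y i) →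
    ∀ a : Fin N → Bool,
      ∑ b ∈ Finset.univ.filter (fun b : Fin N → Bool => ∀ i ∈ S, b i = a i), P x b
        = ∑ b ∈ Finset.univ.filter (fun b : Fin N → Bool => ∀ i ∈ S, b i = a i), P y b

/-!
Maximal violation forces every outcome of an input `x` with `⟨x⟩ = ±1` to have parity `⟨x⟩`,
so on such an input each correlator equals, up to that sign, the correlator of the complementary
set of parties; no-signalling transports correlators between inputs that agree on the parties
involved. For input `(0,0,1)` even parity makes the number of `-1` outcomes equal to
`(3 - A₀ - B₀ - C₁) / 2 ∈ {0, 2}`, which is the formula. For the bound, positivity of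
`P(++-|110) + P(--+|110) = (1 + ⟨A₁B₁⟩ - ⟨A₁C₀⟩ - ⟨B₁C₀⟩) / 4` together with
`⟨A₁B₁⟩ = -⟨C₁⟩`, `⟨A₁C₀⟩ = ⟨B₀⟩`, `⟨B₁C₀⟩ = ⟨A₀⟩` gives `⟨A₀⟩ + ⟨B₀⟩ + ⟨C₁⟩ ≤ 1`.
-/

open Finset

theorem sum_mul_eq_of_marginals_eq {ι β : Type*} [Fintype ι] [DecidableEq ι] [Fintype β]
    [DecidableEq β] {p q : (ι → β) → ℝ} {S : Finset ι}
    (hpq : ∀ c : ι → β, ∑ b ∈ univ.filter (fun b => ∀ i ∈ S, b i = c i), p b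
      = ∑ b ∈ univ.filter (fun b => ∀ i ∈ S, b i = c i), q b)
    {g : (ι → β) → ℝ} (hg : ∀ a b, (∀ i ∈ S, a i = b i) → g a = g b) :
    ∑ a, p a * g a = ∑ a, q a * g a := by
  let res : (ι → β) → (S → β) := fun a i => a i
  have fiber_eq (c : ι → β) :
      univ.filter (fun a => res a = res c) = univ.filter (fun b => ∀ i ∈ S, b i = c i) := by
    ext a
    simp [res, funext_iff]
  rw [← sum_fiberwise univ res, ← sum_fiberwise univ res]
  refine sum_congr rfl fun r _ => ?_
  by_cases hr : ∃ c, res c = r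
  · obtain ⟨c, rfl⟩ := hr
    have hgc : ∀ a ∈ univ.filter (fun a => res a = res c), g a = g c := fun a ha =>
      hg a c fun i hi => congrFun (mem_filter.1 ha).2 ⟨i, hi⟩
    rw [sum_congr rfl fun a ha => congrArg (p a * ·) (hgc a ha),
      sum_congr rfl fun a ha => congrArg (q a * ·) (hgc a ha), ← sum_mul, ← sum_mul,
      fiber_eq, hpq]
  · push Not at hr
    simp [hr]

theorem IsNSBox.corr_eq {N : ℕ} {P : (Fin N → Bool) → (Fin N → Bool) → ℝ} (hP : IsNSBox P)
    {x y : Fin N → Bool} {S : Finset (Fin N)} (hxy : ∀ i ∈ S, x i = y i) :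
    corr (P x) S = corr (P y) S := by
  unfold corr
  refine sum_mul_eq_of_marginals_eq (S := S) ?_ fun a b hab =>
    prod_congr rfl fun i hi => by rw [hab i hi]
  -- `IsNSBox` decides its filter predicate with a different (equal) `Decidable` instance.
  convert hP.2 x y S hxy

theorem sgn_mul_self (b : Bool) : sgn b * sgn b = 1 := by
  cases b <;> norm_num [sgn]

theorem abs_prod_sgn {ι : Type*} (s : Finset ι) (a : ι → Bool) : |∏ i ∈ s, sgn (a i)| = 1 := by
  rw [abs_prod]
  exact prod_eq_one fun i _ => by cases a i <;> norm_num [sgn]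

def SupportedOnParity {N : ℕ} (p : (Fin N → Bool) → ℝ) (ε : ℝ) : Prop :=
  ∀ a, p a ≠ 0 → ∏ i, sgn (a i) = ε

theorem IsProb.supportedOnParity_of_corr_univ_eq {N : ℕ} {p : (Fin N → Bool) → ℝ}
    (hp : IsProb p) {ε : ℝ} (hε : |ε| = 1) (hcorr : corr p univ = ε) :
    SupportedOnParity p ε := by
  intro a ha
  have hε2 : ε * ε = 1 := by rw [← sq, ← sq_abs, hε, one_pow]
  have hterm (b : Fin N → Bool) : 0 ≤ p b * (1 - ε * ∏ i, sgn (b i)) :=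
    mul_nonneg (hp.1 b) (sub_nonneg.2 <| (le_abs_self _).trans_eq <| by
      rw [abs_mul, hε, abs_prod_sgn, one_mul])
  have hsum : ∑ b, p b * (1 - ε * ∏ i, sgn (b i)) = 0 := by
    simp only [mul_sub, mul_one, sum_sub_distrib, hp.2, mul_left_comm _ ε, ← mul_sum]
    rw [← corr, hcorr, hε2, sub_self]
  have hzero := (sum_eq_zero_iff_of_nonneg fun b _ => hterm b).1 hsum a (mem_univ a)
  have hprod := sub_eq_zero.1 <| (mul_eq_zero.1 hzero).resolve_left ha
  calc ∏ i, sgn (a i) = ε * (ε * ∏ i, sgn (a i)) := by rw [← mul_assoc, hε2, one_mul]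
    _ = ε := by rw [← hprod, mul_one]

theorem SupportedOnParity.corr_eq_mul_corr {N : ℕ} {p : (Fin N → Bool) → ℝ} {ε : ℝ}
    (hp : SupportedOnParity p ε) {S T : Finset (Fin N)} (hST : Disjoint S T)
    (hunion : S ∪ T = univ) :
    corr p S = ε * corr p T := by
  rw [corr, corr, mul_sum]
  refine sum_congr rfl fun a _ => ?_
  by_cases ha : p a = 0
  · simp [ha]
  have hprod : (∏ i ∈ S, sgn (a i)) * ∏ i ∈ T, sgn (a i) = ε := by
    rw [← prod_union hST, hunion, hp a ha]
  have hsq : (∏ i ∈ T, sgn (a i)) * ∏ i ∈ T, sgn (a i) = 1 := by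
    rw [← prod_mul_distrib]
    exact prod_eq_one fun i _ => sgn_mul_self (a i)
  linear_combination (p a * ∏ i ∈ T, sgn (a i)) * hprod - p a * (∏ i ∈ S, sgn (a i)) * hsq

theorem IsProb.one_add_corr_sub_corr_sub_corr_nonneg {N : ℕ} {p : (Fin N → Bool) → ℝ}
    (hp : IsProb p) {i j k : Fin N} (hij : i ≠ j) (hik : i ≠ k) (hjk : j ≠ k) :
    0 ≤ 1 + corr p {i, j} - corr p {i, k} - corr p {j, k} := by
  have hterm (a : Fin N → Bool) :
      p a * ((1 + sgn (a i) * sgn (a j)) * (1 - sgn (a i) * sgn (a k)))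
        = p a + p a * (sgn (a i) * sgn (a j)) - p a * (sgn (a i) * sgn (a k))
          - p a * (sgn (a j) * sgn (a k)) := by
    linear_combination (-(p a) * sgn (a j) * sgn (a k)) * sgn_mul_self (a i)
  have hfactor_nonneg (b c : Bool) : 0 ≤ 1 + sgn b * sgn c ∧ 0 ≤ 1 - sgn b * sgn c := by
    cases b <;> cases c <;> norm_num [sgn]
  calc 0 ≤ ∑ a, p a * ((1 + sgn (a i) * sgn (a j)) * (1 - sgn (a i) * sgn (a k))) :=
        sum_nonneg fun a _ => mul_nonneg (hp.1 a)
          (mul_nonneg (hfactor_nonneg _ _).1 (hfactor_nonneg _ _).2)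
    _ = 1 + corr p {i, j} - corr p {i, k} - corr p {j, k} := by
        simp only [hterm, sum_sub_distrib, sum_add_distrib, hp.2, corr, prod_pair hij,
          prod_pair hik, prod_pair hjk]

theorem univ_fin_three_bool : (univ : Finset (Fin 3 → Bool)) =
    {![false, false, false], ![true, false, false], ![false, true, false], ![true, true, false],
      ![false, false, true], ![true, false, true], ![false, true, true], ![true, true, true]} := by
  decide

theorem sum_fin_three_bool (f : (Fin 3 → Bool) → ℝ) :
    ∑ a, f a = f ![false, false, false] + f ![true, false, false] + f ![false, true, false]
      + f ![true, true, false] + f ![false, false, true] + f ![true, false, true]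
      + f ![false, true, true] + f ![true, true, true] := by
  rw [univ_fin_three_bool]
  repeat rw [sum_insert (by decide)]
  rw [sum_singleton]
  ring

theorem IsProb.add_add_eq_of_supportedOnParity_one {p : (Fin 3 → Bool) → ℝ} (hp : IsProb p)
    (hpar : SupportedOnParity p 1) :
    p ![false, true, true] + p ![true, false, true] + p ![true, true, false]
      = (1 / 4) * (3 - corr p {0} - corr p {1} - corr p {2}) := by
  have hodd (a : Fin 3 → Bool) (ha : ∏ i, sgn (a i) = -1) : p a = 0 := by
    by_contra h
    linarith [hpar a h]
  have h₁ := hodd ![true, false, false] (by simp [Fin.prod_univ_three, sgn])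
  have h₂ := hodd ![false, true, false] (by simp [Fin.prod_univ_three, sgn])
  have h₃ := hodd ![false, false, true] (by simp [Fin.prod_univ_three, sgn])
  have h₄ := hodd ![true, true, true] (by simp [Fin.prod_univ_three, sgn])
  have htotal := hp.2
  rw [sum_fin_three_bool] at htotal
  simp only [corr, sum_fin_three_bool, prod_singleton, sgn, mul_ite, mul_neg, mul_one,
    Matrix.cons_val_zero, Matrix.cons_val_one, Matrix.cons_val, Bool.false_eq_true, ↓reduceIte]
  linarith

/-- For a tripartite no-signalling box maximally violating the Mermin inequality, the
probability (for input `(0,0,1)`) that exactly one outcome is `-1` equals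
`(1/4)(3 - ⟨0⟩₁ - ⟨0⟩₂ - ⟨1⟩₃)` and is at least `1/2`. -/
theorem mermin_tripartite_randomness (P : (Fin 3 → Bool) → (Fin 3 → Bool) → ℝ)
    (hP : IsNSBox P)
    (h001 : corr (P ![false, false, true]) Finset.univ = 1)
    (h010 : corr (P ![false, true, false]) Finset.univ = 1)
    (h100 : corr (P ![true, false, false]) Finset.univ = 1)
    (h111 : corr (P ![true, true, true]) Finset.univ = -1) :
    P ![false, false, true] ![false, true, true]
        + P ![false, false, true] ![true, false, true]
        + P ![false, false, true] ![true, true, false]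
      = (1 / 4) * (3 - corr (P ![false, false, true]) {0}
          - corr (P ![false, false, true]) {1} - corr (P ![false, false, true]) {2}) ∧
    (1 / 2 : ℝ) ≤ P ![false, false, true] ![false, true, true]
        + P ![false, false, true] ![true, false, true]
        + P ![false, false, true] ![true, true, false] := by
  have hformula := (hP.1 _).add_add_eq_of_supportedOnParity_one
    ((hP.1 _).supportedOnParity_of_corr_univ_eq abs_one h001)
  have hAB : corr (P ![true, true, false]) {0, 1} = -corr (P ![false, false, true]) {2} := by
    rw [hP.corr_eq (y := ![true, true, true]) (by decide),
      ((hP.1 _).supportedOnParity_of_corr_univ_eq (by norm_num) h111).corr_eq_mul_corr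
        (T := {2}) (by decide) (by decide),
      hP.corr_eq (y := ![false, false, true]) (by decide), neg_one_mul]
  have hAC : corr (P ![true, true, false]) {0, 2} = corr (P ![false, false, true]) {1} := by
    rw [hP.corr_eq (y := ![true, false, false]) (by decide),
      ((hP.1 _).supportedOnParity_of_corr_univ_eq abs_one h100).corr_eq_mul_corr
        (T := {1}) (by decide) (by decide),
      hP.corr_eq (y := ![false, false, true]) (by decide), one_mul]
  have hBC : corr (P ![true, true, false]) {1, 2} = corr (P ![false, false, true]) {0} := by
    rw [hP.corr_eq (y := ![false, true, false]) (by decide),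
      ((hP.1 _).supportedOnParity_of_corr_univ_eq abs_one h010).corr_eq_mul_corr
        (T := {0}) (by decide) (by decide),
      hP.corr_eq (y := ![false, false, true]) (by decide), one_mul]
  have hpos := (hP.1 ![true, true, false]).one_add_corr_sub_corr_sub_corr_nonneg
    (i := 0) (j := 1) (k := 2) (by decide) (by decide) (by decide)
  refine ⟨hformula, ?_⟩
  rw [hformula]
  linarith
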